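/- Let C ⊊ 𝔽₂ⁿ be a binary code such that C ∩ (C^{⋆2})^⊥ ≠ {0} and such that for every nonzero x ∈ C ∩ (C^{⋆2})^⊥ one has C⋆span{x} = C^⊥. Then either (C^{⋆2})^⊥ = span{y} for some y ∈ C, or C = C^⊥ and C^{⋆2} = span{𝟙}^⊥, where 𝟙 is the all-ones vector. -/

import Mathlib

open Finset

/-- The Euclidean dual of a binary code. -/
def dualCode {n : ℕ} (C : Submodule (ZMod 2) (Fin n → ZMod 2)) :
    Submodule (ZMod 2) (Fin n → ZMod 2) where
  carrier := {x | ∀ c ∈ C, ∑ i, x i * c i = 0}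
  add_mem' := by
    intro a b ha hb
    intro c hc
    have : ∑ i, (a + b) i * c i = ∑ i, (a i * c i + b i * c i) := by
      apply Finset.sum_congr rfl
      intro i _
      simp [add_mul]
    rw [this, Finset.sum_add_distrib, ha c hc, hb c hc, add_zero]
  zero_mem' := by
    intro c hc
    simp
  smul_mem' := by
    intro r a ha
    intro c hc
    have : ∑ i, (r • a) i * c i = r * ∑ i, a i * c i := by
      rw [Finset.mul_sum]
      apply Finset.sum_congr rfl
      intro i _
      simp [mul_assoc]
    rw [this, ha c hc, mul_zero]

/-- The (componentwise) Schur product of two binary codes. -/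
def schur {n : ℕ} (C D : Submodule (ZMod 2) (Fin n → ZMod 2)) :
    Submodule (ZMod 2) (Fin n → ZMod 2) :=
  Submodule.span (ZMod 2) {x | ∃ c ∈ C, ∃ d ∈ D, x = c * d}

/-- A pair of binary codes `(C₁, C₂)` is a CSS-T pair if `C₂ ⊆ C₁ ∩ (C₁^{⋆2})^⊥`. -/
def IsCSST {n : ℕ} (C₁ C₂ : Submodule (ZMod 2) (Fin n → ZMod 2)) : Prop :=
  C₂ ≤ C₁ ⊓ dualCode (schur C₁ C₁)

/-!
Fix a nonzero `x ∈ C ∩ (C^{⋆2})^⊥`. Every vector over `𝔽₂` is idempotent, so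
`x = x ⋆ x ∈ C ⋆ span{x} = C^⊥`, and `C^⊥ = C ⋆ span{x} ⊆ C^{⋆2}` gives `(C^{⋆2})^⊥ ⊆ C`.
Hence the hypothesis applies to every nonzero `z ∈ (C^{⋆2})^⊥`, and `x ∈ C^⊥ = C ⋆ span{z}`
forces `supp x ⊆ supp z`. Over `𝔽₂` two different nonzero vectors `z` and `x + z` cannot both
have this property, so `(C^{⋆2})^⊥ = span{x}` and the first alternative always holds.
-/

open LinearMap (BilinForm)

theorem Submodule.eq_span_singleton_of_support_subset {ι : Type*}
    {S : Submodule (ZMod 2) (ι → ZMod 2)} {x : ι → ZMod 2} (hxS : x ∈ S) (hx0 : x ≠ 0)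
    (hsupp : ∀ z ∈ S, z ≠ 0 → Function.support x ⊆ Function.support z) :
    S = Submodule.span (ZMod 2) {x} := by
  refine le_antisymm (fun z hz => ?_) ((Submodule.span_singleton_le_iff_mem x S).2 hxS)
  by_contra hzx
  have hz0 : z ≠ 0 := by rintro rfl; exact hzx (Submodule.zero_mem _)
  have hxz0 : x + z ≠ 0 := by
    intro h
    rw [eq_neg_of_add_eq_zero_right h] at hzx
    exact hzx (Submodule.neg_mem _ (Submodule.mem_span_singleton_self x))
  obtain ⟨i, hi⟩ := Function.ne_iff.1 hx0
  have hzi : z i ≠ 0 := hsupp z hz hz0 hi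
  have hxzi : x i + z i ≠ 0 := hsupp (x + z) (S.add_mem hxS hz) hxz0 hi
  have add_eq_zero_of_ne_zero : ∀ a b : ZMod 2, a ≠ 0 → b ≠ 0 → a + b = 0 := by decide
  exact hxzi (add_eq_zero_of_ne_zero _ _ hi hzi)

section BinaryCode

variable {n : ℕ}

lemma dualCode_eq_orthogonal (C : Submodule (ZMod 2) (Fin n → ZMod 2)) :
    dualCode C = BilinForm.orthogonal (dotProductEquiv (ZMod 2) (Fin n)).toLinearMap C := by
  ext x
  exact forall₂_congr fun c _ => by simp [dotProduct, mul_comm]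

lemma dualCode_dualCode (C : Submodule (ZMod 2) (Fin n → ZMod 2)) :
    dualCode (dualCode C) = C := by
  simp only [dualCode_eq_orthogonal]
  have hrefl : BilinForm.IsRefl (dotProductEquiv (ZMod 2) (Fin n)).toLinearMap := fun x y h => by
    simpa [dotProduct_comm] using h
  refine BilinForm.orthogonal_orthogonal ?_ hrefl C
  exact hrefl.nondegenerate_iff_separatingLeft.2
    (LinearMap.separatingLeft_iff_ker_eq_bot.2 (LinearEquiv.ker _))

lemma dualCode_antitone {A B : Submodule (ZMod 2) (Fin n → ZMod 2)} (h : A ≤ B) :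
    dualCode B ≤ dualCode A :=
  fun _ hz c hc => hz c (h hc)

lemma schur_mono_right (C : Submodule (ZMod 2) (Fin n → ZMod 2))
    {A B : Submodule (ZMod 2) (Fin n → ZMod 2)} (h : A ≤ B) : schur C A ≤ schur C B :=
  Submodule.span_mono fun _ ⟨c, hc, d, hd, hx⟩ => ⟨c, hc, d, h hd, hx⟩

lemma mem_schur_span_singleton_self {C : Submodule (ZMod 2) (Fin n → ZMod 2)}
    {w : Fin n → ZMod 2} (hw : w ∈ C) : w ∈ schur C (Submodule.span (ZMod 2) {w}) := by
  have hww : w * w = w := funext fun i => by rw [Pi.mul_apply, ← sq, ZMod.pow_card]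
  exact Submodule.subset_span ⟨w, hw, w, Submodule.mem_span_singleton_self w, hww.symm⟩

lemma support_subset_of_mem_schur_span_singleton {C : Submodule (ZMod 2) (Fin n → ZMod 2)}
    {w v : Fin n → ZMod 2} (hv : v ∈ schur C (Submodule.span (ZMod 2) {w})) :
    Function.support v ⊆ Function.support w := by
  intro i hvi hwi
  have hle : schur C (Submodule.span (ZMod 2) {w}) ≤ LinearMap.ker (LinearMap.proj i) := by
    refine Submodule.span_le.2 ?_
    rintro _ ⟨c, -, d, hd, rfl⟩
    obtain ⟨a, rfl⟩ := Submodule.mem_span_singleton.1 hd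
    simp [hwi]
  exact hvi (hle hv)

end BinaryCode

theorem stmt_14_general (n : ℕ) (C : Submodule (ZMod 2) (Fin n → ZMod 2))
    (hne : C ⊓ dualCode (schur C C) ≠ ⊥)
    (hx : ∀ x ∈ C ⊓ dualCode (schur C C), x ≠ 0 →
      schur C (Submodule.span (ZMod 2) {x}) = dualCode C) :
    (∃ y ∈ C, dualCode (schur C C) = Submodule.span (ZMod 2) {y}) ∨
      (C = dualCode C ∧
        schur C C = dualCode (Submodule.span (ZMod 2) {(1 : Fin n → ZMod 2)})) := by
  obtain ⟨x, hxCD, hx0⟩ := Submodule.exists_mem_ne_zero_of_ne_bot hne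
  obtain ⟨hxC, hxD⟩ := Submodule.mem_inf.1 hxCD
  have hCx := hx x hxCD hx0
  have hx_dual : x ∈ dualCode C := hCx ▸ mem_schur_span_singleton_self hxC
  have hdual_le : dualCode C ≤ schur C C :=
    hCx ▸ schur_mono_right C ((Submodule.span_singleton_le_iff_mem x C).2 hxC)
  have hD_le_C : dualCode (schur C C) ≤ C := by
    simpa only [dualCode_dualCode] using dualCode_antitone hdual_le
  refine Or.inl ⟨x, hxC,
    Submodule.eq_span_singleton_of_support_subset hxD hx0 fun z hz hz0 => ?_⟩
  have hCz := hx z (Submodule.mem_inf.2 ⟨hD_le_C hz, hz⟩) hz0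
  exact support_subset_of_mem_schur_span_singleton (hCz ▸ hx_dual)

theorem stmt_14 (n : ℕ) (C : Submodule (ZMod 2) (Fin n → ZMod 2))
    (hC : C ≠ ⊤) (hne : C ⊓ dualCode (schur C C) ≠ ⊥)
    (hx : ∀ x ∈ C ⊓ dualCode (schur C C), x ≠ 0 →
      schur C (Submodule.span (ZMod 2) {x}) = dualCode C) :
    (∃ y ∈ C, dualCode (schur C C) = Submodule.span (ZMod 2) {y}) ∨
      (C = dualCode C ∧
        schur C C = dualCode (Submodule.span (ZMod 2) {(1 : Fin n → ZMod 2)})) :=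
  stmt_14_general n C hne hx
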